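/- For every j with 0 ≤ j ≤ n, the invariant ring of the j-th derived subgroup of the unipotent Jonquières group on the full polynomial ring is the subalgebra generated by the first j variables: {f ∈ R : φ(f) = f for all φ ∈ Jonq_u(n)^(j)} = A_j. -/

import Mathlib

open MvPolynomial

noncomputable section

variable (k : Type*) [Field k] (n : ℕ)

/-- `Asub k n j` is the subalgebra of `k[x_1,…,x_n]` generated by the first `j` variables
`x_1, …, x_j`  (so `Asub k n 0 = k` and `Asub k n n` is everything). -/
def Asub (j : ℕ) : Subalgebra k (MvPolynomial (Fin n) k) :=
  Algebra.adjoin k {P | ∃ i : Fin n, (i : ℕ) < j ∧ P = X i}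

/-- The Jonquières subgroup of the automorphism group of affine `n`-space:
all `k`-algebra automorphisms `φ` of `k[x_1,…,x_n]` with `φ (Asub k n j) = Asub k n j`
for every `j = 1, …, n` (the condition for `j = 0` holds trivially). -/
def Jonq : Subgroup (MvPolynomial (Fin n) k ≃ₐ[k] MvPolynomial (Fin n) k) where
  carrier := {φ | ∀ j ≤ n,
    (Asub k n j).map (φ : MvPolynomial (Fin n) k →ₐ[k] MvPolynomial (Fin n) k) = Asub k n j}
  one_mem' := by
    intro j _
    have h : ((1 : MvPolynomial (Fin n) k ≃ₐ[k] MvPolynomial (Fin n) k) :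
        MvPolynomial (Fin n) k →ₐ[k] MvPolynomial (Fin n) k) = AlgHom.id k _ := by
      ext x; rfl
    rw [h, Subalgebra.map_id]
  mul_mem' := by
    intro φ ψ hφ hψ j hj
    have h : ((φ * ψ : MvPolynomial (Fin n) k ≃ₐ[k] MvPolynomial (Fin n) k) :
        MvPolynomial (Fin n) k →ₐ[k] MvPolynomial (Fin n) k)
        = (φ : MvPolynomial (Fin n) k →ₐ[k] MvPolynomial (Fin n) k).comp
          (ψ : MvPolynomial (Fin n) k →ₐ[k] MvPolynomial (Fin n) k) := by
      ext x; rfl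
    rw [h, ← Subalgebra.map_map, hψ j hj, hφ j hj]
  inv_mem' := by
    intro φ hφ j hj
    conv_lhs => rw [← hφ j hj]
    rw [Subalgebra.map_map]
    have h : ((φ⁻¹ : MvPolynomial (Fin n) k ≃ₐ[k] MvPolynomial (Fin n) k) :
          MvPolynomial (Fin n) k →ₐ[k] MvPolynomial (Fin n) k).comp
          (φ : MvPolynomial (Fin n) k →ₐ[k] MvPolynomial (Fin n) k) = AlgHom.id k _ := by
      exact AlgHom.ext fun x => φ.symm_apply_apply x
    rw [h, Subalgebra.map_id]

lemma mem_Jonq_iff (φ : MvPolynomial (Fin n) k ≃ₐ[k] MvPolynomial (Fin n) k) :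
    φ ∈ Jonq k n ↔ ∀ j ≤ n,
      (Asub k n j).map (φ : MvPolynomial (Fin n) k →ₐ[k] MvPolynomial (Fin n) k)
        = Asub k n j :=
  Iff.rfl

/-- The unipotent Jonquières subgroup: those `φ` in the Jonquières subgroup with
`φ (x_i) - x_i ∈ Asub k n (i-1)` for every `i = 1, …, n` (zero-indexed below). -/
def JonqU : Subgroup (MvPolynomial (Fin n) k ≃ₐ[k] MvPolynomial (Fin n) k) where
  carrier := {φ | φ ∈ Jonq k n ∧ ∀ i : Fin n, φ (X i) - X i ∈ Asub k n (i : ℕ)}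
  one_mem' := ⟨(Jonq k n).one_mem, fun i => by
    simpa using (Asub k n (i : ℕ)).zero_mem⟩
  mul_mem' := by
    rintro φ ψ ⟨hφJ, hφU⟩ ⟨hψJ, hψU⟩
    refine ⟨(Jonq k n).mul_mem hφJ hψJ, fun i => ?_⟩
    have h1 : φ (ψ (X i) - X i) ∈ Asub k n (i : ℕ) := by
      have h := (mem_Jonq_iff k n φ).mp hφJ (i : ℕ) (le_of_lt i.isLt)
      rw [← h]
      exact Subalgebra.mem_map.mpr ⟨_, hψU i, rfl⟩
    have h2 : (φ * ψ) (X i) - X i = φ (ψ (X i) - X i) + (φ (X i) - X i) := by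
      rw [AlgEquiv.mul_apply, map_sub]; ring
    rw [h2]
    exact add_mem h1 (hφU i)
  inv_mem' := by
    rintro φ ⟨hφJ, hφU⟩
    refine ⟨(Jonq k n).inv_mem hφJ, fun i => ?_⟩
    have h1 : φ⁻¹ (φ (X i) - X i) ∈ Asub k n (i : ℕ) := by
      have h := (mem_Jonq_iff k n φ⁻¹).mp ((Jonq k n).inv_mem hφJ) (i : ℕ) (le_of_lt i.isLt)
      rw [← h]
      exact Subalgebra.mem_map.mpr ⟨_, hφU i, rfl⟩
    have h2 : φ⁻¹ (X i) - X i = -(φ⁻¹ (φ (X i) - X i)) := by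
      rw [map_sub]
      have h : φ⁻¹ (φ (X i)) = X i := φ.symm_apply_apply (X i)
      rw [h]; ring
    rw [h2]
    exact neg_mem h1

/-- The iterated derived subgroup `H⁽ᵐ⁾` of a subgroup `H`, taken inside the ambient
group: `H⁽⁰⁾ = H` and `H⁽ᵐ⁺¹⁾ = [H⁽ᵐ⁾, H⁽ᵐ⁾]`. -/
def derivedSub {G : Type*} [Group G] (H : Subgroup G) : ℕ → Subgroup G
  | 0 => H
  | m + 1 => ⁅derivedSub H m, derivedSub H m⁆


def elemF (i : Fin n) (p : MvPolynomial (Fin n) k) :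
    MvPolynomial (Fin n) k →ₐ[k] MvPolynomial (Fin n) k :=
  aeval (fun m => if m = i then X i + p else X m)

lemma elemF_X_self (i : Fin n) (p : MvPolynomial (Fin n) k) :
    elemF k n i p (X i) = X i + p := by simp [elemF]

lemma elemF_X_ne (i : Fin n) (p : MvPolynomial (Fin n) k) {m : Fin n} (h : m ≠ i) :
    elemF k n i p (X m) = X m := by simp [elemF, h]

lemma elemF_fix (i : Fin n) (p : MvPolynomial (Fin n) k) {s : Set (Fin n)} (hs : i ∉ s)
    {q : MvPolynomial (Fin n) k} (hq : q ∈ MvPolynomial.supported k s) :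
    elemF k n i p q = q := by
  have h : MvPolynomial.supported k s ≤
      AlgHom.equalizer (elemF k n i p) (AlgHom.id k (MvPolynomial (Fin n) k)) := by
    apply Algebra.adjoin_le
    rintro _ ⟨m, hm, rfl⟩
    have hne : m ≠ i := fun h => hs (h ▸ hm)
    show elemF k n i p (X m) = X m
    exact elemF_X_ne k n i p hne
  exact h hq

lemma algEquiv_ext' {φ ψ : MvPolynomial (Fin n) k ≃ₐ[k] MvPolynomial (Fin n) k}
    (h : ∀ m, φ (X m) = ψ (X m)) : φ = ψ :=
  AlgEquiv.coe_algHom_injective (MvPolynomial.algHom_ext h)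

lemma lt_subset_ne (i : Fin n) :
    {m : Fin n | (m : ℕ) < (i : ℕ)} ⊆ {m : Fin n | m ≠ i} := by
  intro m hm
  exact Fin.ne_of_val_ne (Nat.ne_of_lt hm)

def elemAut (i : Fin n) (p : MvPolynomial (Fin n) k)
    (hp : p ∈ MvPolynomial.supported k {m : Fin n | (m : ℕ) < (i : ℕ)}) :
    MvPolynomial (Fin n) k ≃ₐ[k] MvPolynomial (Fin n) k :=
  AlgEquiv.ofAlgHom (elemF k n i p) (elemF k n i (-p))
    (by
      apply MvPolynomial.algHom_ext
      intro m
      by_cases h : m = i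
      · subst h
        simp only [AlgHom.coe_comp, Function.comp_apply, AlgHom.coe_id, id_eq]
        rw [elemF_X_self, map_add, elemF_X_self,
          elemF_fix k n m p (s := {m_1 : Fin n | m_1 ≠ m}) (by simp) (neg_mem (supported_mono (lt_subset_ne n m) hp))]
        ring
      · simp only [AlgHom.coe_comp, Function.comp_apply, AlgHom.coe_id, id_eq]
        rw [elemF_X_ne k n i (-p) h, elemF_X_ne k n i p h])
    (by
      apply MvPolynomial.algHom_ext
      intro m
      by_cases h : m = i
      · subst h
        simp only [AlgHom.coe_comp, Function.comp_apply, AlgHom.coe_id, id_eq]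
        rw [elemF_X_self, map_add, elemF_X_self,
          elemF_fix k n m (-p) (s := {m_1 : Fin n | m_1 ≠ m}) (by simp) (supported_mono (lt_subset_ne n m) hp)]
        ring
      · simp only [AlgHom.coe_comp, Function.comp_apply, AlgHom.coe_id, id_eq]
        rw [elemF_X_ne k n i p h, elemF_X_ne k n i (-p) h])

lemma elemAut_apply (i : Fin n) (p : MvPolynomial (Fin n) k) (hp) (q : MvPolynomial (Fin n) k) :
    elemAut k n i p hp q = elemF k n i p q := rfl

lemma elemAut_inv (i : Fin n) (p : MvPolynomial (Fin n) k) (hp) :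
    (elemAut k n i p hp)⁻¹ = elemAut k n i (-p) (neg_mem hp) := by
  apply inv_eq_of_mul_eq_one_right
  apply algEquiv_ext' k n
  intro m
  rw [AlgEquiv.mul_apply]
  by_cases h : m = i
  · subst h
    rw [elemAut_apply, elemAut_apply, elemF_X_self, map_add, elemF_X_self,
      elemF_fix k n m p (s := {m_1 : Fin n | m_1 ≠ m}) (by simp) (neg_mem (supported_mono (lt_subset_ne n m) hp))]
    show _ = (1 : MvPolynomial (Fin n) k ≃ₐ[k] MvPolynomial (Fin n) k) (X m)
    rw [AlgEquiv.one_apply]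
    ring
  · rw [elemAut_apply, elemAut_apply, elemF_X_ne k n i (-p) h, elemF_X_ne k n i p h]
    rfl



lemma Asub_eq_supported (j : ℕ) :
    Asub k n j = MvPolynomial.supported k {m : Fin n | (m : ℕ) < j} := by
  unfold Asub MvPolynomial.supported
  congr 1
  ext P
  constructor
  · rintro ⟨i, hi, rfl⟩; exact ⟨i, hi, rfl⟩
  · rintro ⟨i, hi, rfl⟩; exact ⟨i, hi, rfl⟩

lemma X_mem_Asub {j : ℕ} {m : Fin n} (hm : (m : ℕ) < j) : X m ∈ Asub k n j :=
  Algebra.subset_adjoin ⟨m, hm, rfl⟩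

lemma map_eq_of (φ : MvPolynomial (Fin n) k ≃ₐ[k] MvPolynomial (Fin n) k)
    (A : Subalgebra k (MvPolynomial (Fin n) k))
    (h1 : ∀ a ∈ A, φ a ∈ A) (h2 : ∀ a ∈ A, φ.symm a ∈ A) :
    A.map (φ : MvPolynomial (Fin n) k →ₐ[k] MvPolynomial (Fin n) k) = A := by
  apply le_antisymm
  · rintro _ ⟨a, ha, rfl⟩; exact h1 a ha
  · intro a ha
    exact ⟨φ.symm a, h2 a ha, φ.apply_symm_apply a⟩

lemma elemF_maps_Asub (i : Fin n) (p : MvPolynomial (Fin n) k)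
    (hp : p ∈ MvPolynomial.supported k {m : Fin n | (m : ℕ) < (i : ℕ)}) (l : ℕ) :
    ∀ a ∈ Asub k n l, elemF k n i p a ∈ Asub k n l := by
  intro a ha
  have h : Asub k n l ≤ Subalgebra.comap (elemF k n i p) (Asub k n l) := by
    apply Algebra.adjoin_le
    rintro _ ⟨m, hm, rfl⟩
    show X m ∈ Subalgebra.comap (elemF k n i p) (Asub k n l)
    rw [Subalgebra.mem_comap]
    by_cases h : m = i
    · subst h
      rw [elemF_X_self]
      refine add_mem (X_mem_Asub k n hm) ?_
      rw [Asub_eq_supported]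
      exact MvPolynomial.supported_mono (fun x hx => lt_trans hx hm) hp
    · rw [elemF_X_ne k n i p h]
      exact X_mem_Asub k n hm
  exact (Subalgebra.mem_comap _ _ _).mp (h ha)

lemma elemAut_symm (i : Fin n) (p : MvPolynomial (Fin n) k) (hp) :
    (elemAut k n i p hp).symm = elemAut k n i (-p) (neg_mem hp) := by
  have h := elemAut_inv k n i p hp
  rwa [show (elemAut k n i p hp)⁻¹ = (elemAut k n i p hp).symm from rfl] at h

lemma elemAut_mem_JonqU (i : Fin n) (p : MvPolynomial (Fin n) k)
    (hp : p ∈ MvPolynomial.supported k {m : Fin n | (m : ℕ) < (i : ℕ)}) :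
    elemAut k n i p hp ∈ JonqU k n := by
  constructor
  · intro l _
    apply map_eq_of
    · exact elemF_maps_Asub k n i p hp l
    · rw [elemAut_symm]
      exact elemF_maps_Asub k n i (-p) (neg_mem hp) l
  · intro m
    by_cases h : m = i
    · subst h
      rw [elemAut_apply, elemF_X_self, Asub_eq_supported]
      simpa using hp
    · rw [elemAut_apply, elemF_X_ne k n i p h]
      simpa using (Asub k n (m : ℕ)).zero_mem


def fixer (j : ℕ) : Subgroup (MvPolynomial (Fin n) k ≃ₐ[k] MvPolynomial (Fin n) k) where
  carrier := {φ | ∀ f ∈ Asub k n j, φ f = f}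
  one_mem' := fun _ _ => rfl
  mul_mem' := by
    intro φ ψ hφ hψ f hf
    rw [AlgEquiv.mul_apply, hψ f hf, hφ f hf]
  inv_mem' := by
    intro φ hφ f hf
    show φ.symm f = f
    conv_lhs => rw [← hφ f hf]
    exact φ.symm_apply_apply f

lemma mem_fixer_iff (j : ℕ) (φ : MvPolynomial (Fin n) k ≃ₐ[k] MvPolynomial (Fin n) k) :
    φ ∈ fixer k n j ↔ ∀ m : Fin n, (m : ℕ) < j → φ (X m) = X m := by
  constructor
  · intro h m hm
    exact h (X m) (X_mem_Asub k n hm)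
  · intro h f hf
    have hle : Asub k n j ≤
        AlgHom.equalizer (φ : MvPolynomial (Fin n) k →ₐ[k] MvPolynomial (Fin n) k)
          (AlgHom.id k (MvPolynomial (Fin n) k)) := by
      apply Algebra.adjoin_le
      rintro _ ⟨m, hm, rfl⟩
      exact h m hm
    exact hle hf

lemma derived_le (j : ℕ) :
    derivedSub (JonqU k n) j ≤ JonqU k n ⊓ fixer k n j := by
  induction j with
  | zero =>
    refine le_inf le_rfl ?_
    intro φ _
    rw [mem_fixer_iff]
    intro m hm
    exact absurd hm (Nat.not_lt_zero _)
  | succ j ih =>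
    show ⁅derivedSub (JonqU k n) j, derivedSub (JonqU k n) j⁆ ≤ _
    rw [Subgroup.commutator_le]
    intro φ hφ ψ hψ
    obtain ⟨hφU, hφF⟩ := Subgroup.mem_inf.mp (ih hφ)
    obtain ⟨hψU, hψF⟩ := Subgroup.mem_inf.mp (ih hψ)
    refine Subgroup.mem_inf.mpr ⟨?_, ?_⟩
    · exact mul_mem (mul_mem (mul_mem hφU hψU) (inv_mem hφU)) (inv_mem hψU)
    · rw [mem_fixer_iff]
      intro m hm
      have hφF' := inv_mem hφF
      have hψF' := inv_mem hψF
      rw [commutatorElement_def, AlgEquiv.mul_apply, AlgEquiv.mul_apply, AlgEquiv.mul_apply]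
      rcases Nat.lt_succ_iff_lt_or_eq.mp hm with hlt | heq
      · have hX := X_mem_Asub k n (j := j) hlt
        rw [hψF' _ hX, hφF' _ hX, hψF _ hX, hφF _ hX]
      · have hpA : φ (X m) - X m ∈ Asub k n j := by have := hφU.2 m; rwa [heq] at this
        have hqA : ψ (X m) - X m ∈ Asub k n j := by have := hψU.2 m; rwa [heq] at this
        set p := φ (X m) - X m with hp
        set q := ψ (X m) - X m with hq
        have hφX : φ (X m) = X m + p := by rw [hp]; ring
        have hψX : ψ (X m) = X m + q := by rw [hq]; ring
        have hφinvX : φ⁻¹ (X m) = X m - p := by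
          have h1 : φ (X m - p) = X m := by
            rw [map_sub, hφX, hφF p hpA]; ring
          show φ.symm (X m) = X m - p
          conv_lhs => rw [← h1]
          exact φ.symm_apply_apply _
        have hψinvX : ψ⁻¹ (X m) = X m - q := by
          have h1 : ψ (X m - q) = X m := by
            rw [map_sub, hψX, hψF q hqA]; ring
          show ψ.symm (X m) = X m - q
          conv_lhs => rw [← h1]
          exact ψ.symm_apply_apply _
        rw [hψinvX, map_sub, hφinvX, hφF' q hqA]
        have h3 : ψ (X m - p - q) = X m - p := by
          rw [map_sub, map_sub, hψX, hψF p hpA, hψF q hqA]; ring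
        have h4 : φ (X m - p) = X m := by
          rw [map_sub, hφX, hφF p hpA]; ring
        rw [show X m - p - q = X m - p - q from rfl] at h3
        calc φ (ψ (X m - p - q)) = φ (X m - p) := by rw [h3]
          _ = X m := h4


lemma X_mem_supported' {s : Set (Fin n)} {m : Fin n} (hm : m ∈ s) :
    X m ∈ MvPolynomial.supported k s :=
  Algebra.subset_adjoin (Set.mem_image_of_mem _ hm)

open scoped commutatorElement in
lemma elem_mem_derived (j : ℕ) (i : Fin n) (hij : j ≤ (i : ℕ)) (p : MvPolynomial (Fin n) k)
    (hp : p ∈ MvPolynomial.supported k {m : Fin n | j ≤ (m : ℕ) ∧ (m : ℕ) < (i : ℕ)}) :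
    elemAut k n i p (MvPolynomial.supported_mono (fun _ hx => hx.2) hp)
      ∈ derivedSub (JonqU k n) j := by
  induction j generalizing i p with
  | zero => exact elemAut_mem_JonqU k n i p _
  | succ j ih =>
    have hjn : j < n := lt_of_lt_of_le (Nat.lt_of_succ_le hij) (Nat.le_of_lt i.isLt)
    set jF : Fin n := ⟨j, hjn⟩ with hjF
    have hjFi : (jF : ℕ) < (i : ℕ) := Nat.lt_of_succ_le hij
    have hjFne : jF ≠ i := Fin.ne_of_val_ne (Nat.ne_of_lt hjFi)
    have h1mem : (1 : MvPolynomial (Fin n) k) ∈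
        MvPolynomial.supported k {m : Fin n | j ≤ (m : ℕ) ∧ (m : ℕ) < (jF : ℕ)} :=
      one_mem _
    have hXpmem : X jF * p ∈
        MvPolynomial.supported k {m : Fin n | j ≤ (m : ℕ) ∧ (m : ℕ) < (i : ℕ)} := by
      refine mul_mem (X_mem_supported' k n
        (show jF ∈ {m : Fin n | j ≤ (m : ℕ) ∧ (m : ℕ) < (i : ℕ)} from ⟨le_refl j, hjFi⟩)) ?_
      exact MvPolynomial.supported_mono
        (show {m : Fin n | j + 1 ≤ (m : ℕ) ∧ (m : ℕ) < (i : ℕ)} ⊆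
            {m : Fin n | j ≤ (m : ℕ) ∧ (m : ℕ) < (i : ℕ)} from
          fun x hx => ⟨Nat.le_of_succ_le hx.1, hx.2⟩) hp
    have ha := ih jF (le_refl j) 1 h1mem
    have hb := ih i (Nat.le_of_succ_le hij) (X jF * p) hXpmem
    set a := elemAut k n jF 1 (MvPolynomial.supported_mono (fun _ hx => hx.2) h1mem) with haa
    set b := elemAut k n i (X jF * p)
      (MvPolynomial.supported_mono (fun _ hx => hx.2) hXpmem) with hbb
    have hpfix_a : ∀ r : MvPolynomial (Fin n) k, elemF k n jF r p = p := by
      intro r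
      refine elemF_fix k n jF r (s := {m : Fin n | j + 1 ≤ (m : ℕ) ∧ (m : ℕ) < (i : ℕ)})
        ?_ hp
      intro hx
      exact absurd hx.1 (by simp [hjF])
    have hpfix_b : ∀ r : MvPolynomial (Fin n) k, elemF k n i r p = p := by
      intro r
      refine elemF_fix k n i r (s := {m : Fin n | j + 1 ≤ (m : ℕ) ∧ (m : ℕ) < (i : ℕ)})
        ?_ hp
      intro hx
      exact absurd hx.2 (lt_irrefl _)
    have hXi_a : ∀ r : MvPolynomial (Fin n) k, elemF k n jF r (X i) = X i :=
      fun r => elemF_X_ne k n jF r (Ne.symm hjFne)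
    have hXjF_b : ∀ r : MvPolynomial (Fin n) k, elemF k n i r (X jF) = X jF :=
      fun r => elemF_X_ne k n i r hjFne
    have key : ⁅a, b⁆ = elemAut k n i p (MvPolynomial.supported_mono (fun _ hx => hx.2) hp) := by
      apply algEquiv_ext' k n
      intro m
      rw [commutatorElement_def, AlgEquiv.mul_apply, AlgEquiv.mul_apply, AlgEquiv.mul_apply,
        haa, hbb, elemAut_inv, elemAut_inv]
      simp only [elemAut_apply]
      by_cases hmi : m = i
      · rw [hmi]
        simp only [map_add, map_neg, map_mul, map_one, elemF_X_self, hXi_a, hXjF_b,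
          hpfix_a, hpfix_b]
        ring
      · by_cases hmj : m = jF
        · rw [hmj]
          simp only [map_add, map_neg, map_mul, map_one, elemF_X_self, hXi_a, hXjF_b,
            hpfix_a, hpfix_b]
          ring
        · rw [elemF_X_ne k n i (-(X jF * p)) hmi, elemF_X_ne k n jF (-1) hmj,
            elemF_X_ne k n i (X jF * p) hmi, elemF_X_ne k n jF 1 hmj,
            elemF_X_ne k n i p hmi]
    rw [← key]
    exact Subgroup.commutator_mem_commutator ha hb

lemma aeval_mem_supported {s : Set (Fin n)} (g : Fin n → MvPolynomial (Fin n) k)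
    (hg : ∀ m, g m ∈ MvPolynomial.supported k s) (q : MvPolynomial (Fin n) k) :
    aeval g q ∈ MvPolynomial.supported k s := by
  induction q using MvPolynomial.induction_on with
  | C a =>
    rw [aeval_C]
    exact Subalgebra.algebraMap_mem _ a
  | add p q hp hq => rw [map_add]; exact add_mem hp hq
  | mul_X p m hp =>
    rw [map_mul, aeval_X]
    exact mul_mem hp (hg m)

lemma not_dep [Infinite k] (i : Fin n) (f : MvPolynomial (Fin n) k)
    (H : ∀ c : k, elemF k n i (C c) f = f) :
    f ∈ MvPolynomial.supported k {m : Fin n | m ≠ i} := by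
  classical
  set sub : MvPolynomial (Fin n) k →ₐ[k] Polynomial (MvPolynomial (Fin n) k) :=
    aeval (fun m => if m = i then Polynomial.C (X m) + Polynomial.X else Polynomial.C (X m))
    with hsubdef
  have hcomp : ∀ c : k, Polynomial.eval (C c : MvPolynomial (Fin n) k) (sub f) = f := by
    intro c
    have hrh : (Polynomial.evalRingHom (C c : MvPolynomial (Fin n) k)).comp
        (sub : MvPolynomial (Fin n) k →+* Polynomial (MvPolynomial (Fin n) k)) =
        (elemF k n i (C c) : MvPolynomial (Fin n) k →+* MvPolynomial (Fin n) k) := by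
      apply MvPolynomial.ringHom_ext
      · intro r
        simp [hsubdef, elemF, MvPolynomial.algebraMap_eq]
      · intro m
        by_cases h : m = i
        · subst h
          simp [hsubdef, elemF]
        · simp [hsubdef, elemF, h]
    have := congrArg (fun g => g f) hrh
    simpa using this.trans (H c)
  have hsub : sub f = Polynomial.C f := by
    have hz : sub f - Polynomial.C f = 0 := by
      apply Polynomial.eq_zero_of_infinite_isRoot
      apply Set.Infinite.mono ?_
        (Set.infinite_range_of_injective (MvPolynomial.C_injective (Fin n) k))
      rintro _ ⟨c, rfl⟩
      simp [Polynomial.IsRoot, hcomp c]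
    exact sub_eq_zero.mp hz
  set z : MvPolynomial (Fin n) k →ₐ[k] MvPolynomial (Fin n) k :=
    aeval (fun m => if m = i then 0 else X m) with hzdef
  have hzf : f = z f := by
    have hrh : (Polynomial.eval₂RingHom
        (z : MvPolynomial (Fin n) k →+* MvPolynomial (Fin n) k) (X i)).comp
        (sub : MvPolynomial (Fin n) k →+* Polynomial (MvPolynomial (Fin n) k)) =
        RingHom.id (MvPolynomial (Fin n) k) := by
      apply MvPolynomial.ringHom_ext
      · intro r
        simp [hsubdef, hzdef, MvPolynomial.algebraMap_eq]
      · intro m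
        by_cases h : m = i
        · subst h
          simp [hsubdef, hzdef]
        · simp [hsubdef, hzdef, h]
    have h2 := congrArg (fun g => g f) hrh
    simp only [RingHom.coe_comp, Function.comp_apply, RingHom.id_apply, RingHom.coe_coe,
      Polynomial.coe_eval₂RingHom] at h2
    rw [hsub, Polynomial.eval₂_C] at h2
    exact h2.symm
  rw [hzf]
  apply aeval_mem_supported
  intro m
  by_cases h : m = i
  · simp only [h, if_pos rfl]
    exact Subalgebra.zero_mem _
  · simp only [if_neg h]
    exact Algebra.subset_adjoin (Set.mem_image_of_mem _ h)

/-- The invariants of the `j`-th derived subgroup of the unipotent Jonquières group on the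
whole polynomial ring are exactly the polynomials in the first `j` variables. -/
theorem invariants_derived_jonqU [IsAlgClosed k] (hn : 1 ≤ n) (j : ℕ) (hj : j ≤ n) :
    {f : MvPolynomial (Fin n) k | ∀ φ ∈ derivedSub (JonqU k n) j, φ f = f}
      = (Asub k n j : Set (MvPolynomial (Fin n) k)) := by
  ext f
  simp only [Set.mem_setOf_eq, SetLike.mem_coe]
  constructor
  · intro H
    haveI : Infinite k := inferInstance
    rw [Asub_eq_supported, MvPolynomial.mem_supported]
    intro m hm
    by_contra hmj
    have hjm : j ≤ (m : ℕ) := Nat.le_of_not_lt hmj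
    have hsup : f ∈ MvPolynomial.supported k {l : Fin n | l ≠ m} := by
      apply not_dep k n m f
      intro c
      have hc : C c ∈ MvPolynomial.supported k
          {l : Fin n | j ≤ (l : ℕ) ∧ (l : ℕ) < (m : ℕ)} := by
        have h0 := Subalgebra.algebraMap_mem (MvPolynomial.supported k
          {l : Fin n | j ≤ (l : ℕ) ∧ (l : ℕ) < (m : ℕ)}) c
        rwa [MvPolynomial.algebraMap_eq] at h0
      have hmem := elem_mem_derived k n j m hjm (C c) hc
      have h2 := H _ hmem
      rwa [elemAut_apply] at h2
    exact (MvPolynomial.mem_supported.mp hsup hm) rfl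
  · intro hf φ hφ
    exact (Subgroup.mem_inf.mp (derived_le k n j hφ)).2 f hf

end
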